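/- Let A : Ω → M_n(ℂ) be a continuous family of matrices on a topological space Ω, and suppose rank A(ξ) ≤ k for all ξ in a dense subset of Ω on which it equals k, while rank A(ξ₀) < k at some ξ₀. Then the Grassmannian-valued map ξ ↦ ker A(ξ), defined on {ξ : rank A(ξ) = k}, need not extend continuously to ξ₀; specifically, for A(ξ) = D²ψ(ξ) with ψ(ξ) = ξ₁ξ₂² + (ξ₃−ξ₂ξ₄)² on ℂ⁴ and ξ₀ = (1,0,0,0), no continuous extension of ξ ↦ ker A(ξ) to ξ₀ exists. -/

import Mathlib

/-- The Hessian matrix of second (complex) partial derivatives of `ψ` at `ξ`. -/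
noncomputable def hess {n : ℕ} (ψ : (Fin n → ℂ) → ℂ) (ξ : Fin n → ℂ) :
    Matrix (Fin n) (Fin n) ℂ :=
  Matrix.of fun i j => fderiv ℂ (fun η => fderiv ℂ ψ η (Pi.single j 1)) ξ (Pi.single i 1)

/-- `ψ(ξ) = ξ₁ξ₂² + (ξ₃ − ξ₂ξ₄)²` on `ℂ⁴`. -/
noncomputable def ψ (ξ : Fin 4 → ℂ) : ℂ :=
  ξ 0 * (ξ 1) ^ 2 + (ξ 2 - ξ 1 * ξ 3) ^ 2

/-! Along the curve `ε ↦ (1, ε, cε, 0)` the Hessian of `ψ` has rank 3 and its kernel is spanned by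
`(c, 0, ε, 1)`, a unit vector for the sup norm of `Fin 4 → ℂ` as long as `‖c‖, ‖ε‖ ≤ 1`. These
kernel vectors tend to `(c, 0, 0, 1)` as `ε → 0`, so a limit line would contain both
`(0, 0, 0, 1)` and `(1, 0, 0, 1)`. -/

open Filter Topology Module ContinuousLinearMap

theorem Matrix.rank_add_one_of_ker_eq_span_singleton {K m n : Type*} [Field K] [Fintype m]
    [Fintype n] {A : Matrix m n K} {v : n → K} (hv : v ≠ 0)
    (hA : LinearMap.ker A.mulVecLin = K ∙ v) : A.rank + 1 = Fintype.card n := by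
  rw [Matrix.rank, ← finrank_span_singleton (K := K) hv, ← hA,
    LinearMap.finrank_range_add_finrank_ker, finrank_fintype_fun_eq_card]

theorem pi_norm_eq_of_norm_apply_eq {ι E : Type*} [Fintype ι] [SeminormedAddCommGroup E]
    {x : ι → E} {r : ℝ} (i : ι) (hi : ‖x i‖ = r) (h : ∀ j, ‖x j‖ ≤ r) : ‖x‖ = r :=
  le_antisymm ((pi_norm_le_iff_of_nonneg (hi ▸ norm_nonneg _)).2 h) (hi ▸ norm_le_pi_norm x i)

theorem two_le_finrank_of_linearIndependent_pair {K V : Type*} [DivisionRing K] [AddCommGroup V]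
    [Module K V] {L : Submodule K V} [FiniteDimensional K L] {x y : V}
    (hxy : LinearIndependent K ![x, y]) (hx : x ∈ L) (hy : y ∈ L) : 2 ≤ finrank K L := by
  have hspan : Submodule.span K (Set.range ![x, y]) ≤ L := by
    rw [Submodule.span_le, Set.range_subset_iff]
    intro i
    fin_cases i <;> simpa
  simpa [finrank_span_eq_card hxy] using Submodule.finrank_mono hspan

/-- Sequential form of the statement that the kernel map `ξ ↦ ker (A ξ)`, restricted to the
points where `A ξ` has rank `k`, tends to `L` at `ξ₀`. -/
def KernelLimitsIn {n : ℕ} (A : (Fin n → ℂ) → Matrix (Fin n) (Fin n) ℂ) (k : ℕ)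
    (ξ₀ : Fin n → ℂ) (L : Submodule ℂ (Fin n → ℂ)) : Prop :=
  ∀ ξ : ℕ → Fin n → ℂ, Tendsto ξ atTop (𝓝 ξ₀) → (∀ j, (A (ξ j)).rank = k) →
    ∀ u : ℕ → Fin n → ℂ, (∀ j, ‖u j‖ = 1 ∧ (A (ξ j)).mulVec (u j) = 0) →
      ∀ w : Fin n → ℂ, Tendsto u atTop (𝓝 w) → w ∈ L

theorem fderiv_ψ_apply (η v : Fin 4 → ℂ) :
    fderiv ℂ ψ η v = v 0 * η 1 ^ 2 + 2 * η 0 * η 1 * v 1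
      + 2 * (η 2 - η 1 * η 3) * (v 2 - v 1 * η 3 - η 1 * v 3) := by
  rw [show ψ = fun ξ : Fin 4 → ℂ => ξ 0 * ξ 1 ^ 2 + (ξ 2 - ξ 1 * ξ 3) ^ 2 from rfl]
  simp (disch := fun_prop) only [fderiv_fun_add, fderiv_fun_mul, fderiv_fun_pow, fderiv_fun_sub,
    fderiv_apply, fderiv_fun_id, comp_id, add_apply, sub_apply, smul_apply, proj_apply,
    smul_eq_mul, nsmul_eq_mul]
  ring

theorem fderiv_fderiv_ψ_apply (ξ v w : Fin 4 → ℂ) :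
    fderiv ℂ (fun η => fderiv ℂ ψ η v) ξ w =
      2 * ξ 1 * (v 0 * w 1 + w 0 * v 1) + 2 * ξ 0 * v 1 * w 1
        + 2 * (w 2 - w 1 * ξ 3 - ξ 1 * w 3) * (v 2 - v 1 * ξ 3 - ξ 1 * v 3)
        - 2 * (ξ 2 - ξ 1 * ξ 3) * (v 1 * w 3 + w 1 * v 3) := by
  simp (disch := fun_prop) only [fderiv_ψ_apply, fderiv_fun_add, fderiv_fun_mul, fderiv_fun_pow,
    fderiv_fun_sub, fderiv_apply, fderiv_fun_id, fderiv_fun_const, Pi.zero_apply, comp_id,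
    comp_zero, add_apply, sub_apply, smul_apply, proj_apply, zero_apply, smul_eq_mul, nsmul_eq_mul]
  ring

theorem hess_ψ_curve (c ε : ℂ) :
    hess ψ ![1, ε, c * ε, 0] =
      !![0, 2 * ε, 0, 0;
        2 * ε, 2, 0, -2 * c * ε;
        0, 0, 2, -2 * ε;
        0, -2 * c * ε, -2 * ε, 2 * ε ^ 2] := by
  ext i j
  fin_cases i <;> fin_cases j <;> simp [hess, fderiv_fderiv_ψ_apply] <;> ring

theorem ker_hess_ψ_curve (c : ℂ) {ε : ℂ} (hε : ε ≠ 0) :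
    LinearMap.ker (hess ψ ![1, ε, c * ε, 0]).mulVecLin = ℂ ∙ ![c, 0, ε, 1] := by
  ext x
  rw [LinearMap.mem_ker, Submodule.mem_span_singleton, hess_ψ_curve]
  constructor
  · intro h
    have hx₁ : x 1 = 0 := by
      simpa [Matrix.mulVec, dotProduct, Fin.sum_univ_four, hε] using congrFun h 0
    have row₁ : 2 * ε * x 0 + 2 * x 1 - 2 * c * ε * x 3 = 0 := by
      simpa [Matrix.mulVec, dotProduct, Fin.sum_univ_four, ← sub_eq_add_neg] using congrFun h 1
    have row₂ : 2 * x 2 - 2 * ε * x 3 = 0 := by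
      simpa [Matrix.mulVec, dotProduct, Fin.sum_univ_four, ← sub_eq_add_neg] using congrFun h 2
    have hx₀ : x 0 = c * x 3 :=
      mul_left_cancel₀ hε (by linear_combination (row₁ - 2 * hx₁) / 2)
    have hx₂ : x 2 = ε * x 3 := by linear_combination row₂ / 2
    refine ⟨x 3, ?_⟩
    ext i
    fin_cases i <;> simp [hx₀, hx₁, hx₂, mul_comm]
  · rintro ⟨a, rfl⟩
    ext i
    fin_cases i <;> simp [Matrix.mulVec, dotProduct, Fin.sum_univ_four] <;> ring

theorem KernelLimitsIn.mem_of_hess_ψ {L : Submodule ℂ (Fin 4 → ℂ)}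
    (hL : KernelLimitsIn (hess ψ) 3 ![1, 0, 0, 0] L) {c : ℂ} (hc : ‖c‖ ≤ 1) :
    ![c, 0, 0, 1] ∈ L := by
  set ε : ℕ → ℂ := fun j => 1 / ((j : ℂ) + 1)
  have hε_ne : ∀ j, ε j ≠ 0 := fun j => one_div_ne_zero (Nat.cast_add_one_ne_zero j)
  have hε_le : ∀ j, ‖ε j‖ ≤ 1 := fun j => by
    simpa [ε] using inv_le_one_of_one_le₀ (by norm_cast; omega : (1 : ℝ) ≤ ‖(j : ℂ) + 1‖)
  have hε_lim : Tendsto ε atTop (𝓝 0) := tendsto_one_div_add_atTop_nhds_zero_nat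
  have hker (j : ℕ) :
      LinearMap.ker (hess ψ ![1, ε j, c * ε j, 0]).mulVecLin = ℂ ∙ ![c, 0, ε j, 1] :=
    ker_hess_ψ_curve c (hε_ne j)
  refine hL (fun j => ![1, ε j, c * ε j, 0]) ?_ (fun j => ?_) (fun j => ![c, 0, ε j, 1])
    (fun j => ⟨?_, ?_⟩) _ ?_
  · have hγ : Continuous fun e : ℂ => (![1, e, c * e, 0] : Fin 4 → ℂ) := by fun_prop
    have h := (hγ.tendsto 0).comp hε_lim
    rwa [mul_zero] at h
  · simpa using Matrix.rank_add_one_of_ker_eq_span_singleton (by simp) (hker j)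
  · refine pi_norm_eq_of_norm_apply_eq 3 (by simp) fun i => ?_
    fin_cases i <;> simp [hc, hε_le]
  · exact LinearMap.mem_ker.1 (hker j ▸ Submodule.mem_span_singleton_self _)
  · have hγ : Continuous fun e : ℂ => (![c, 0, e, 1] : Fin 4 → ℂ) := by fun_prop
    exact (hγ.tendsto 0).comp hε_lim

/-- There is no line `L` (1-dimensional subspace of ℂ⁴) to which the kernel-line map
`ξ ↦ ker D²ψ(ξ)` extends continuously at `ξ₀ = (1,0,0,0)`: i.e. no line `L` such that,
along every sequence of rank-3 points converging to `ξ₀`, all limit points of unit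
vectors spanning the kernels lie in `L`. -/
theorem stmt_18 :
    ¬ ∃ L : Submodule ℂ (Fin 4 → ℂ), Module.finrank ℂ L = 1 ∧
      ∀ ξ : ℕ → Fin 4 → ℂ,
        Filter.Tendsto ξ Filter.atTop (nhds ![1, 0, 0, 0]) →
        (∀ j, (hess ψ (ξ j)).rank = 3) →
        ∀ u : ℕ → Fin 4 → ℂ,
          (∀ j, ‖u j‖ = 1 ∧ (hess ψ (ξ j)).mulVec (u j) = 0) →
          ∀ w : Fin 4 → ℂ, Filter.Tendsto u Filter.atTop (nhds w) → w ∈ L := by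
  rintro ⟨L, hL_dim, hL⟩
  have hind : LinearIndependent ℂ ![(![0, 0, 0, 1] : Fin 4 → ℂ), ![1, 0, 0, 1]] := by
    rw [LinearIndependent.pair_iff]
    intro s t hst
    have ht : t = 0 := by simpa using congrFun hst 0
    have hst₃ : s + t = 0 := by simpa using congrFun hst 3
    exact ⟨by simpa [ht] using hst₃, ht⟩
  have h₂ := two_le_finrank_of_linearIndependent_pair hind
    (KernelLimitsIn.mem_of_hess_ψ hL (c := 0) (by simp)) (KernelLimitsIn.mem_of_hess_ψ hL (by simp))
  rw [hL_dim] at h₂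
  omega
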